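/- Let A be a unital associative ring and f ∈ A an element such that the inner derivation ad(f) : a ↦ f·a − a·f is locally nilpotent on A, i.e. for every a ∈ A there exists N ∈ ℕ with ad(f)^N(a) = 0. Then for every u ∈ A and every n ∈ ℕ there exist m ∈ ℕ and v ∈ A such that u·f^m = f^n·v; that is, u·f^m ∈ f^n·A. -/

import Mathlib

/-!
Since `u * f = f * u - ⁅f, u⁆`, we have `u * f ^ (M + 1) = f * (u * f ^ M) - ⁅f, u⁆ * f ^ M`. So if
`u * f ^ M ∈ f ^ n * A` and `⁅f, u⁆ * f ^ M ∈ f ^ (n + 1) * A`, then `u * f ^ (M + 1) ∈ f ^ (n + 1) * A`;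
by induction on `n`, `u` satisfies the conclusion whenever `⁅f, u⁆` does. Induction on the
nilpotency order of `ad f` at `u` finishes, starting from `u = 0`.
-/

section

variable {A : Type*} [Ring A]

theorem mul_pow_eq_pow_mul_of_le {f u v : A} {m n M : ℕ} (h : u * f ^ m = f ^ n * v)
    (hM : m ≤ M) : u * f ^ M = f ^ n * (v * f ^ (M - m)) := by
  rw [← Nat.add_sub_cancel' hM, pow_add, ← mul_assoc, h, mul_assoc, Nat.add_sub_cancel_left]

theorem mul_pow_succ_eq_sub_lie_mul (f u : A) (M : ℕ) :
    u * f ^ (M + 1) = f * (u * f ^ M) - ⁅f, u⁆ * f ^ M := by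
  rw [Ring.lie_def, pow_succ']
  noncomm_ring

theorem exists_mul_pow_eq_pow_mul_of_lie {f u : A}
    (h : ∀ n : ℕ, ∃ (m : ℕ) (v : A), ⁅f, u⁆ * f ^ m = f ^ n * v) (n : ℕ) :
    ∃ (m : ℕ) (v : A), u * f ^ m = f ^ n * v := by
  induction n with
  | zero => exact ⟨0, u, by simp⟩
  | succ n ih =>
    obtain ⟨m₀, v₀, h₀⟩ := ih
    obtain ⟨m₁, v₁, h₁⟩ := h (n + 1)
    set M := max m₀ m₁
    refine ⟨M + 1, v₀ * f ^ (M - m₀) - v₁ * f ^ (M - m₁), ?_⟩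
    rw [mul_pow_succ_eq_sub_lie_mul, mul_pow_eq_pow_mul_of_le h₀ (le_max_left m₀ m₁),
      mul_pow_eq_pow_mul_of_le h₁ (le_max_right m₀ m₁), mul_sub, ← mul_assoc, ← pow_succ']

theorem exists_mul_pow_eq_pow_mul_of_iterate_lie_eq_zero {f u : A} {N : ℕ}
    (hN : (fun x => ⁅f, x⁆)^[N] u = 0) (n : ℕ) :
    ∃ (m : ℕ) (v : A), u * f ^ m = f ^ n * v := by
  induction N generalizing u n with
  | zero => exact ⟨0, 0, by simp_all⟩
  | succ N ih =>
    rw [Function.iterate_succ_apply] at hN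
    exact exists_mul_pow_eq_pow_mul_of_lie (ih hN) n

end

theorem stmt_2 (A : Type*) [Ring A] (f : A)
    (hnil : ∀ a : A, ∃ N : ℕ, (fun x => f * x - x * f)^[N] a = 0) :
    ∀ (u : A) (n : ℕ), ∃ (m : ℕ) (v : A), u * f ^ m = f ^ n * v := by
  intro u n
  obtain ⟨N, hN⟩ := hnil u
  simp only [← Ring.lie_def] at hN
  exact exists_mul_pow_eq_pow_mul_of_iterate_lie_eq_zero hN n
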